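/- arXiv:1005.0150 — 2 statements merged into one kernel-verified Lean document; each statement's English description precedes it below -/
import Mathlib

section
/- If M = (M_t)_{t∈ℝ} is an increment martingale with respect to a filtration (F_t)_{t∈ℝ} and τ is a stopping time bounded below by some s₀ ∈ ℝ, then the process (M_t − M_{t∧τ})_{t∈ℝ} is a martingale. -/
/-!
Since `τ ≥ s₀`, the process `M_t - M_{t∧τ}` equals `N_t - N_{t∧τ}` for the martingale
`N = M - M_{·∧s₀}`, so it suffices to show that a right-continuous martingale stopped at a
stopping time is again a martingale. For stopping times with countably many values this is
optional sampling: `N_τ = N_{τ∧s} + N_{τ∨s} - N_s`, and `E[N_{τ∨s} | ℱ_s] = N_s` because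
`ℱ_s ⊆ ℱ_{τ∨s}`. A general `τ` is approximated from above by the dyadic stopping times
`τₙ = ⌈2ⁿτ⌉ / 2ⁿ`. By right-continuity `N_{t∧τₙ} → N_{t∧τ}` pointwise, and the family
`N_{t∧τₙ} = E[N_t | ℱ_{t∧τₙ}]` is uniformly integrable, so by Vitali's theorem the
martingale property passes to the limit.
-/

open MeasureTheory Filter Set

noncomputable section

variable {Ω : Type*}

/-- The increment of the process `M` over the interval `(s, ·]`:  `ˢM_t = M_t - M_{t ∧ s}`. -/
def incr (M : ℝ → Ω → ℝ) (s t : ℝ) (ω : Ω) : ℝ := M t ω - M (min t s) ω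

/-- A real function is càdlàg : right-continuous with left limits. -/
def Cadlag (f : ℝ → ℝ) : Prop :=
  (∀ t, ContinuousWithinAt f (Set.Ici t) t) ∧
    ∀ t : ℝ, ∃ l, Tendsto f (nhdsWithin t (Set.Iio t)) (nhds l)

/-- The jump `ΔM_t(ω) = M_t(ω) - M_{t-}(ω)`. -/
def jump (M : ℝ → Ω → ℝ) (ω : Ω) (t : ℝ) : ℝ :=
  M t ω - Function.leftLim (fun u => M u ω) t

/-- A filtration indexed by `ℝ` is right-continuous. -/
def RightContinuousFiltration {m : MeasurableSpace Ω} (ℱ : Filtration ℝ m) : Prop :=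
  ∀ t : ℝ, (ℱ t : MeasurableSpace Ω) = ⨅ (u : ℝ) (_ : t < u), (ℱ u : MeasurableSpace Ω)

/-- Each `ℱ t` contains all `μ`-null sets. -/
def CompleteFiltration {m : MeasurableSpace Ω} (ℱ : Filtration ℝ m) (μ : Measure Ω) : Prop :=
  ∀ (t : ℝ) (s : Set Ω), μ s = 0 → MeasurableSet[ℱ t] s

/-- A martingale in the sense of the paper: adapted, integrable, with the martingale property. -/
def IsMart {m : MeasurableSpace Ω} (ℱ : Filtration ℝ m) (μ : Measure Ω) (M : ℝ → Ω → ℝ) : Prop :=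
  Martingale M ℱ μ ∧ ∀ t, Integrable (M t) μ

/-- A square integrable martingale. -/
def IsSqMart {m : MeasurableSpace Ω} (ℱ : Filtration ℝ m) (μ : Measure Ω)
    (M : ℝ → Ω → ℝ) : Prop :=
  IsMart ℱ μ M ∧ ∀ t, MemLp (M t) 2 μ

/-- An increment martingale: a càdlàg process all of whose increment processes are
martingales. -/
def IsIncMart {m : MeasurableSpace Ω} (ℱ : Filtration ℝ m) (μ : Measure Ω)
    (M : ℝ → Ω → ℝ) : Prop :=
  (∀ ω, Cadlag fun t => M t ω) ∧ ∀ s : ℝ, IsMart ℱ μ (incr M s)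

/-- An increment square integrable martingale. -/
def IsIncSqMart {m : MeasurableSpace Ω} (ℱ : Filtration ℝ m) (μ : Measure Ω)
    (M : ℝ → Ω → ℝ) : Prop :=
  (∀ ω, Cadlag fun t => M t ω) ∧ ∀ s : ℝ, IsSqMart ℱ μ (incr M s)

/-- The process `M` stopped at the (finite) random time `τ`. -/
def stopped (M : ℝ → Ω → ℝ) (τ : Ω → ℝ) : ℝ → Ω → ℝ := fun t ω => M (min t (τ ω)) ω

/-- A localizing sequence of real-valued stopping times. -/
def Localizing {m : MeasurableSpace Ω} (ℱ : Filtration ℝ m) (μ : Measure Ω)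
    (σ : ℕ → Ω → ℝ) : Prop :=
  (∀ n, IsStoppingTime ℱ (fun ω => (σ n ω : WithTop ℝ))) ∧ (∀ ω, Monotone fun n => σ n ω) ∧
    ∀ᵐ ω ∂μ, Tendsto (fun n => σ n ω) atTop atTop

/-- A local martingale indexed by `ℝ`. -/
def IsLocalMart {m : MeasurableSpace Ω} (ℱ : Filtration ℝ m) (μ : Measure Ω)
    (M : ℝ → Ω → ℝ) : Prop :=
  ∃ σ : ℕ → Ω → ℝ, Localizing ℱ μ σ ∧ ∀ n, IsMart ℱ μ (stopped M (σ n))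

/-- A locally square integrable martingale indexed by `ℝ`. -/
def IsLocSqMart {m : MeasurableSpace Ω} (ℱ : Filtration ℝ m) (μ : Measure Ω)
    (M : ℝ → Ω → ℝ) : Prop :=
  ∃ σ : ℕ → Ω → ℝ, Localizing ℱ μ σ ∧ ∀ n, IsSqMart ℱ μ (stopped M (σ n))

/-- An increment local martingale: every increment process is adapted and a local
martingale (with a localizing sequence possibly depending on `s`). -/
def IsIncLocalMart {m : MeasurableSpace Ω} (ℱ : Filtration ℝ m) (μ : Measure Ω)
    (M : ℝ → Ω → ℝ) : Prop :=
  (∀ ω, Cadlag fun t => M t ω) ∧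
    ∀ s : ℝ, Adapted ℱ (incr M s) ∧ IsLocalMart ℱ μ (incr M s)

/-- An increment locally square integrable martingale. -/
def IsIncLocSqMart {m : MeasurableSpace Ω} (ℱ : Filtration ℝ m) (μ : Measure Ω)
    (M : ℝ → Ω → ℝ) : Prop :=
  (∀ ω, Cadlag fun t => M t ω) ∧
    ∀ s : ℝ, Adapted ℱ (incr M s) ∧ IsLocSqMart ℱ μ (incr M s)

/-- A stopping time with values in `(-∞, ∞]` (encoded in `EReal`, `⊥` excluded separately). -/
def IsStoppingTimeE {m : MeasurableSpace Ω} (ℱ : Filtration ℝ m) (τ : Ω → EReal) : Prop :=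
  ∀ t : ℝ, MeasurableSet[ℱ t] {ω | τ ω ≤ (t : EReal)}

/-- The process `M` stopped at the `EReal`-valued random time `τ`. -/
def stoppedE (M : ℝ → Ω → ℝ) (τ : Ω → EReal) : ℝ → Ω → ℝ :=
  fun t ω => M ((min (t : EReal) (τ ω)).toReal) ω

/-- The process `M`, extended to `-∞` by `Z` and stopped at the `EReal`-valued time `τ`,
as a process indexed by `EReal` (only the values on `[-∞, ∞)` are relevant). -/
def stopE' (M : ℝ → Ω → ℝ) (Z : Ω → ℝ) (τ : Ω → EReal) (t : EReal) (ω : Ω) : ℝ :=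
  if min t (τ ω) = ⊥ then Z ω else M ((min t (τ ω)).toReal) ω

/-- The filtration extended to the index `-∞` by `ℱ_{-∞} = ⨅ t, ℱ t`. -/
def FE {m : MeasurableSpace Ω} (ℱ : Filtration ℝ m) (t : EReal) : MeasurableSpace Ω :=
  if t = ⊥ then ⨅ u : ℝ, (ℱ u : MeasurableSpace Ω) else ℱ t.toReal

/-- A martingale indexed by `[-∞, ∞)` with respect to the extended filtration. -/
def IsMartE {m : MeasurableSpace Ω} (ℱ : Filtration ℝ m) (μ : Measure Ω)
    (N : EReal → Ω → ℝ) : Prop :=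
  (∀ t : EReal, t ≠ ⊤ → StronglyMeasurable[FE ℱ t] (N t)) ∧
  (∀ t : EReal, t ≠ ⊤ → Integrable (N t) μ) ∧
  ∀ s t : EReal, s ≤ t → t ≠ ⊤ → μ[N t | FE ℱ s] =ᵐ[μ] N s

/-- The predictable σ-algebra on `ℝ × Ω`, generated by the simple predictable sets
`B × C` with `C ∈ ℱ t` and `B ⊆ (t, ∞)` a bounded Borel set. -/
def predictableSigma {m : MeasurableSpace Ω} (ℱ : Filtration ℝ m) :
    MeasurableSpace (ℝ × Ω) :=
  MeasurableSpace.generateFrom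
    {A | ∃ (t : ℝ) (B : Set ℝ) (C : Set Ω), B ⊆ Set.Ioi t ∧ MeasurableSet B ∧
      Bornology.IsBounded B ∧ MeasurableSet[ℱ t] C ∧ A = B ×ˢ C}

/-- A predictable process. -/
def PredictableProc {m : MeasurableSpace Ω} (ℱ : Filtration ℝ m) (X : ℝ → Ω → ℝ) : Prop :=
  @Measurable (ℝ × Ω) ℝ (predictableSigma ℱ) _ fun p => X p.1 p.2

/-- The process `X` is associated with the family of increment processes `I`. -/
def Assoc {m : MeasurableSpace Ω} (μ : Measure Ω) (I : ℝ → ℝ → Ω → ℝ) (X : ℝ → Ω → ℝ) : Prop :=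
  ∀ s : ℝ, ∀ᵐ ω ∂μ, ∀ t, X t ω - X (min t s) ω = I s t ω

/-- `V` is a quadratic variation of the increment local martingale `M`:
`V ∈ A₀(ℱ)`, `ΔV = (ΔM)²` and `(ˢM)² - ˢV` is a local martingale for every `s`. -/
def IsQuadVar {m : MeasurableSpace Ω} (ℱ : Filtration ℝ m) (μ : Measure Ω)
    (M V : ℝ → Ω → ℝ) : Prop :=
  (∀ ω, Monotone fun t => V t ω) ∧ (∀ ω, Cadlag fun t => V t ω) ∧ Adapted ℱ V ∧
  (∀ᵐ ω ∂μ, Tendsto (fun t => V t ω) atBot (nhds 0)) ∧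
  (∀ᵐ ω ∂μ, ∀ t, jump V ω t = (jump M ω t) ^ 2) ∧
  ∀ s : ℝ, IsLocalMart ℱ μ fun t ω => (incr M s t ω) ^ 2 - incr V s t ω

/-- `V` is a predictable quadratic variation of `M`: an increasing predictable càdlàg
adapted locally integrable process with `V_{-∞} = 0` a.s. such that `(ˢM)² - ˢV` is a
local martingale for every `s`. -/
def IsPredQV {m : MeasurableSpace Ω} (ℱ : Filtration ℝ m) (μ : Measure Ω)
    (M V : ℝ → Ω → ℝ) : Prop :=
  (∀ ω, Monotone fun t => V t ω) ∧ (∀ ω, Cadlag fun t => V t ω) ∧ Adapted ℱ V ∧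
  PredictableProc ℱ V ∧
  (∀ᵐ ω ∂μ, Tendsto (fun t => V t ω) atBot (nhds 0)) ∧
  (∃ σ : ℕ → Ω → ℝ, Localizing ℱ μ σ ∧ ∀ n t, Integrable (stopped V (σ n) t) μ) ∧
  ∀ s : ℝ, IsLocalMart ℱ μ fun t ω => (incr M s t ω) ^ 2 - incr V s t ω

/-- `Mc` is a continuous martingale component of the increment local martingale `M`:
it is continuous, its increments are adapted local martingales, and the increments of
`M - Mc` are purely discontinuous local martingales (orthogonal to every continuous
local martingale vanishing at `-∞`). -/
def IsContMartPart {m : MeasurableSpace Ω} (ℱ : Filtration ℝ m) (μ : Measure Ω)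
    (M Mc : ℝ → Ω → ℝ) : Prop :=
  (∀ ω, Continuous fun t => Mc t ω) ∧
  (∀ s : ℝ, Adapted ℱ (incr Mc s)) ∧
  (∀ s : ℝ, IsLocalMart ℱ μ (incr Mc s)) ∧
  (∀ s : ℝ, IsLocalMart ℱ μ fun t ω => incr M s t ω - incr Mc s t ω) ∧
  ∀ s : ℝ, ∀ N : ℝ → Ω → ℝ, (∀ ω, Continuous fun t => N t ω) → IsLocalMart ℱ μ N →
    (∀ᵐ ω ∂μ, Tendsto (fun t => N t ω) atBot (nhds 0)) →
    IsLocalMart ℱ μ fun t ω => (incr M s t ω - incr Mc s t ω) * N t ω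

/-- The Lebesgue–Stieltjes measure on `ℝ` induced by the (pathwise increasing,
right-continuous) process `V` at the outcome `ω`. -/
def stj (V : ℝ → Ω → ℝ) (hm : ∀ ω, Monotone fun t => V t ω)
    (hrc : ∀ ω t, ContinuousWithinAt (fun u => V u ω) (Set.Ici t) t) (ω : Ω) : Measure ℝ :=
  StieltjesFunction.measure ⟨fun t => V t ω, hm ω, hrc ω⟩

end

open scoped Topology

theorem Set.Countable.range_comp {α β γ : Type*} {f : α → β} (hf : (range f).Countable)
    (g : β → γ) : (range fun a => g (f a)).Countable :=
  (hf.image g).mono (Set.range_comp g f).subset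

noncomputable def dyadicCeil (n : ℕ) (x : ℝ) : ℝ := ⌈x * 2 ^ n⌉ / 2 ^ n

theorem le_dyadicCeil (n : ℕ) (x : ℝ) : x ≤ dyadicCeil n x :=
  (le_div_iff₀ (by positivity)).mpr (Int.le_ceil _)

theorem dyadicCeil_lt (n : ℕ) (x : ℝ) : dyadicCeil n x < x + (2 ^ n)⁻¹ := by
  rw [dyadicCeil, div_lt_iff₀ (by positivity), add_mul, inv_mul_cancel₀ (by positivity)]
  exact Int.ceil_lt_add_one _

theorem dyadicCeil_le_iff {n : ℕ} {x y : ℝ} : dyadicCeil n x ≤ y ↔ x ≤ ⌊y * 2 ^ n⌋ / 2 ^ n := by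
  rw [dyadicCeil, div_le_iff₀ (by positivity), le_div_iff₀ (by positivity), ← Int.le_floor,
    Int.ceil_le]

theorem tendsto_dyadicCeil (x : ℝ) : Tendsto (dyadicCeil · x) atTop (𝓝[≥] x) := by
  refine tendsto_nhdsWithin_iff.mpr ⟨?_, .of_forall fun n => le_dyadicCeil n x⟩
  have h : Tendsto (fun n : ℕ => x + (2 ^ n)⁻¹) atTop (𝓝 x) := by
    simpa using (tendsto_const_nhds (x := x)).add
      (tendsto_inv_atTop_zero.comp (tendsto_pow_atTop_atTop_of_one_lt one_lt_two))
  exact tendsto_of_tendsto_of_tendsto_of_le_of_le tendsto_const_nhds h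
    (le_dyadicCeil · x) fun n => (dyadicCeil_lt n x).le

theorem countable_range_dyadicCeil (n : ℕ) : (range (dyadicCeil n)).Countable :=
  (Set.countable_range fun k : ℤ => (k : ℝ) / 2 ^ n).mono <| by
    rintro _ ⟨x, rfl⟩
    exact ⟨_, rfl⟩

namespace MeasureTheory

variable {Ω ι : Type*} {m : MeasurableSpace Ω} {μ : Measure Ω}

theorem martingale_of_tendsto_of_uniformIntegrable [Preorder ι] {ℱ : Filtration ι m}
    [IsFiniteMeasure μ]
    {X : ℕ → ι → Ω → ℝ} {Y : ι → Ω → ℝ} (hX : ∀ n, Martingale (X n) ℱ μ)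
    (hUI : ∀ i, UniformIntegrable (fun n => X n i) 1 μ)
    (hlim : ∀ i ω, Tendsto (fun n => X n i ω) atTop (𝓝 (Y i ω))) :
    Martingale Y ℱ μ := by
  have hY_meas (i : ι) : StronglyMeasurable[ℱ i] (Y i) :=
    stronglyMeasurable_of_tendsto _ (fun n => (hX n).stronglyAdapted i)
      (tendsto_pi_nhds.mpr (hlim i))
  have hY_memLp (i : ι) : MemLp (Y i) 1 μ :=
    (hUI i).memLp_of_ae_tendsto (.of_forall (hlim i))
  have hY_int (i : ι) : Integrable (Y i) μ := memLp_one_iff_integrable.mp (hY_memLp i)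
  have hsetIntegral_tendsto (i : ι) (A : Set Ω) :
      Tendsto (fun n => ∫ ω in A, X n i ω ∂μ) atTop (𝓝 (∫ ω in A, Y i ω ∂μ)) :=
    tendsto_setIntegral_of_L1' _ (hY_int i).aestronglyMeasurable
      (.of_forall fun n => (hX n).integrable i)
      (tendsto_Lp_finite_of_tendsto_ae le_rfl ENNReal.one_ne_top (hUI i).1 (hY_memLp i)
        (hUI i).2.1 (.of_forall (hlim i))) A
  refine ⟨hY_meas, fun i j hij => ?_⟩
  refine (ae_eq_condExp_of_forall_setIntegral_eq (ℱ.le i) (hY_int j)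
    (fun _ _ _ => (hY_int i).integrableOn) (fun A hA _ => ?_)
    (hY_meas i).aestronglyMeasurable).symm
  exact tendsto_nhds_unique (hsetIntegral_tendsto i A)
    ((hsetIntegral_tendsto j A).congr fun n => ((hX n).setIntegral_eq hij hA).symm)

section CountableRange

variable [LinearOrder ι] [Nonempty ι] {ℱ : Filtration ι m} {N : ι → Ω → ℝ} {τ : Ω → WithTop ι}

theorem StronglyAdapted.stronglyMeasurable_stoppedValue_of_countable_range
    (hN : StronglyAdapted ℱ N) (hτ : IsStoppingTime ℱ τ) (hcnt : (range τ).Countable)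
    {i : ι} (hle : ∀ ω, τ ω ≤ i) : StronglyMeasurable[ℱ i] (stoppedValue N τ) := by
  refine Measurable.stronglyMeasurable fun B hB => ?_
  have hpre : stoppedValue N τ ⁻¹' B =
      ⋃ j ∈ range τ, {ω | τ ω = j} ∩ N j.untopA ⁻¹' B := by
    ext ω
    simpa [stoppedValue] using ⟨fun h => ⟨ω, rfl, h⟩, fun ⟨_, hω, h⟩ => hω ▸ h⟩
  rw [hpre]
  refine .biUnion hcnt ?_
  rintro _ ⟨ω, rfl⟩
  obtain ⟨j, hj⟩ := WithTop.ne_top_iff_exists.mp (ne_top_of_le_ne_top WithTop.coe_ne_top (hle ω))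
  have hji : j ≤ i := WithTop.coe_le_coe.mp (hj ▸ hle ω)
  rw [← hj]
  simp only [WithTop.untopD_coe]
  exact ℱ.mono hji _ ((hτ.measurableSet_eq_of_countable_range hcnt j).inter ((hN j).measurable hB))

variable [TopologicalSpace ι] [OrderTopology ι] [FirstCountableTopology ι] [IsFiniteMeasure μ]

theorem Martingale.integrable_stoppedValue_of_countable_range (hN : Martingale N ℱ μ)
    (hτ : IsStoppingTime ℱ τ) (hcnt : (range τ).Countable) {t : ι} (hle : ∀ ω, τ ω ≤ t) :
    Integrable (stoppedValue N τ) μ :=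
  integrable_condExp.congr
    (hN.stoppedValue_ae_eq_condExp_of_le_const_of_countable_range hτ hle hcnt).symm

theorem Martingale.condExp_stoppedValue_ae_eq_of_const_le (hN : Martingale N ℱ μ)
    (hτ : IsStoppingTime ℱ τ) (hcnt : (range τ).Countable) {s t : ι} (hst : s ≤ t)
    (hsτ : ∀ ω, s ≤ τ ω) (hτt : ∀ ω, τ ω ≤ t) :
    μ[stoppedValue N τ | ℱ s] =ᵐ[μ] N s := by
  calc μ[stoppedValue N τ | ℱ s]
      =ᵐ[μ] μ[μ[N t | hτ.measurableSpace] | ℱ s] :=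
        condExp_congr_ae
          (hN.stoppedValue_ae_eq_condExp_of_le_const_of_countable_range hτ hτt hcnt)
    _ =ᵐ[μ] μ[N t | ℱ s] :=
        condExp_condExp_of_le (hτ.le_measurableSpace_of_const_le hsτ)
          (hτ.measurableSpace_le_of_le hτt)
    _ =ᵐ[μ] N s := hN.condExp_ae_eq hst

theorem Martingale.condExp_stoppedValue_ae_eq_stoppedValue_min (hN : Martingale N ℱ μ)
    (hτ : IsStoppingTime ℱ τ) (hcnt : (range τ).Countable) {t : ι} (hle : ∀ ω, τ ω ≤ t)
    (s : ι) : μ[stoppedValue N τ | ℱ s] =ᵐ[μ] stoppedValue N fun ω => min (τ ω) s := by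
  set τmin : Ω → WithTop ι := fun ω => min (τ ω) s
  set τmax : Ω → WithTop ι := fun ω => max (τ ω) s
  have hsplit : stoppedValue N τ = stoppedValue N τmin + (stoppedValue N τmax - N s) := by
    ext ω
    obtain ⟨j, hj⟩ := WithTop.ne_top_iff_exists.mp (ne_top_of_le_ne_top WithTop.coe_ne_top (hle ω))
    simp only [stoppedValue, τmin, τmax, ← hj, Pi.add_apply, Pi.sub_apply, ← WithTop.coe_min,
      ← WithTop.coe_max, WithTop.untopD_coe]
    rcases le_total j s with hjs | hsj
    · simp [hjs]
    · simp [hsj]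
  have hτmin_le : ∀ ω, τmin ω ≤ s := fun ω => min_le_right _ _
  have hτmax_le : ∀ ω, τmax ω ≤ ↑(max t s) :=
    fun ω => WithTop.coe_max t s ▸ max_le_max (hle ω) le_rfl
  have hτmin := hτ.min_const s
  have hτmax := hτ.max_const s
  have hcnt_min : (range τmin).Countable := hcnt.range_comp (min · (s : WithTop ι))
  have hcnt_max : (range τmax).Countable := hcnt.range_comp (max · (s : WithTop ι))
  have hmin_meas : StronglyMeasurable[ℱ s] (stoppedValue N τmin) :=
    hN.stronglyAdapted.stronglyMeasurable_stoppedValue_of_countable_range hτmin hcnt_min hτmin_le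
  have hmin_int := hN.integrable_stoppedValue_of_countable_range hτmin hcnt_min hτmin_le
  have hmax_int := hN.integrable_stoppedValue_of_countable_range hτmax hcnt_max hτmax_le
  have hmax_cond : μ[stoppedValue N τmax | ℱ s] =ᵐ[μ] N s :=
    hN.condExp_stoppedValue_ae_eq_of_const_le hτmax hcnt_max (le_max_right t s)
      (fun ω => le_max_right _ _) hτmax_le
  rw [hsplit]
  filter_upwards [condExp_add hmin_int (hmax_int.sub (hN.integrable s)) (ℱ s),
    condExp_sub hmax_int (hN.integrable s) (ℱ s), hmax_cond] with ω h_add h_sub h_max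
  simp only [Pi.add_apply, Pi.sub_apply] at h_add h_sub ⊢
  rw [h_add, h_sub, h_max, condExp_of_stronglyMeasurable (ℱ.le s) hmin_meas hmin_int,
    condExp_of_stronglyMeasurable (ℱ.le s) (hN.stronglyAdapted s) (hN.integrable s)]
  ring

theorem Martingale.stoppedProcess_of_countable_range (hN : Martingale N ℱ μ)
    (hτ : IsStoppingTime ℱ τ) (hcnt : (range τ).Countable) :
    Martingale (stoppedProcess N τ) ℱ μ := by
  have hcnt_min (t : ι) : (range fun ω => min (t : WithTop ι) (τ ω)).Countable :=
    hcnt.range_comp _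
  refine ⟨fun t => ?_, fun s t hst => ?_⟩
  · exact hN.stronglyAdapted.stronglyMeasurable_stoppedValue_of_countable_range
      ((isStoppingTime_const ℱ t).min hτ) (hcnt_min t) fun ω => min_le_left _ _
  · refine (hN.condExp_stoppedValue_ae_eq_stoppedValue_min ((isStoppingTime_const ℱ t).min hτ)
      (hcnt_min t) (fun ω => min_le_left _ _) s).trans (.of_eq ?_)
    ext ω
    simp only [stoppedValue, stoppedProcess]
    rw [min_right_comm, min_eq_right (WithTop.coe_le_coe.mpr hst)]

theorem Martingale.uniformIntegrable_stoppedProcess (hN : Martingale N ℱ μ)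
    {τ : ℕ → Ω → WithTop ι} (hτ : ∀ n, IsStoppingTime ℱ (τ n))
    (hcnt : ∀ n, (range (τ n)).Countable) (t : ι) :
    UniformIntegrable (fun n => stoppedProcess N (τ n) t) 1 μ := by
  have hτt (n : ℕ) := (isStoppingTime_const ℱ t).min (hτ n)
  have hcnt_min (n : ℕ) : (range fun ω => min (t : WithTop ι) (τ n ω)).Countable :=
    (hcnt n).range_comp _
  refine ((hN.integrable t).uniformIntegrable_condExp
    fun n => (hτt n).measurableSpace_le_of_le fun ω => min_le_left _ _).ae_eq fun n => ?_
  exact (hN.stoppedValue_ae_eq_condExp_of_le_const_of_countable_range (hτt n)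
    (fun ω => min_le_left _ _) (hcnt_min n)).symm

end CountableRange

noncomputable def dyadicCeilTime (τ : Ω → WithTop ℝ) (n : ℕ) : Ω → WithTop ℝ :=
  fun ω => (τ ω).map (dyadicCeil n)

theorem isStoppingTime_dyadicCeilTime {ℱ : Filtration ℝ m} {τ : Ω → WithTop ℝ}
    (hτ : IsStoppingTime ℱ τ) (n : ℕ) : IsStoppingTime ℱ (dyadicCeilTime τ n) := by
  intro u
  have hset : {ω | dyadicCeilTime τ n ω ≤ u} = {ω | τ ω ≤ ((⌊u * 2 ^ n⌋ / 2 ^ n : ℝ))} := by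
    ext ω
    cases h : τ ω <;> simp [dyadicCeilTime, h, dyadicCeil_le_iff]
  rw [hset]
  exact ℱ.mono ((div_le_iff₀ (by positivity)).mpr (Int.floor_le _)) _ (hτ _)

theorem countable_range_dyadicCeilTime (τ : Ω → WithTop ℝ) (n : ℕ) :
    (range (dyadicCeilTime τ n)).Countable :=
  (((countable_range_dyadicCeil n).image WithTop.some).insert ⊤).mono <| by
    rintro _ ⟨ω, rfl⟩
    cases h : τ ω <;> simp [dyadicCeilTime, h]

theorem tendsto_stoppedProcess_dyadicCeilTime {N : ℝ → Ω → ℝ} {ω : Ω}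
    (hN : ∀ t, ContinuousWithinAt (N · ω) (Ici t) t) (τ : Ω → WithTop ℝ) (t : ℝ) :
    Tendsto (fun n => stoppedProcess N (dyadicCeilTime τ n) t ω) atTop
      (𝓝 (stoppedProcess N τ t ω)) := by
  cases h : τ ω with
  | top => simp [stoppedProcess, dyadicCeilTime, h]
  | coe x =>
    simp only [stoppedProcess, dyadicCeilTime, h, WithTop.map_coe,
      ← WithTop.coe_min, WithTop.untopD_coe]
    have hmin : Tendsto (fun n => min t (dyadicCeil n x)) atTop (𝓝[≥] min t x) :=
      tendsto_nhdsWithin_iff.mpr ⟨(continuous_const.min continuous_id).continuousAt.tendsto.comp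
        (tendsto_nhdsWithin_iff.mp (tendsto_dyadicCeil x)).1,
        .of_forall fun n => min_le_min le_rfl (le_dyadicCeil n x)⟩
    exact (hN (min t x)).tendsto.comp hmin

theorem Martingale.stoppedProcess_of_rightContinuous [IsFiniteMeasure μ] {ℱ : Filtration ℝ m}
    {N : ℝ → Ω → ℝ} (hN : Martingale N ℱ μ)
    (hrc : ∀ ω t, ContinuousWithinAt (N · ω) (Ici t) t) {τ : Ω → WithTop ℝ}
    (hτ : IsStoppingTime ℱ τ) : Martingale (stoppedProcess N τ) ℱ μ :=
  martingale_of_tendsto_of_uniformIntegrable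
    (fun n => hN.stoppedProcess_of_countable_range (isStoppingTime_dyadicCeilTime hτ n)
      (countable_range_dyadicCeilTime τ n))
    (hN.uniformIntegrable_stoppedProcess (isStoppingTime_dyadicCeilTime hτ)
      (countable_range_dyadicCeilTime τ))
    fun t ω => tendsto_stoppedProcess_dyadicCeilTime (hrc ω) τ t

end MeasureTheory

section IncrementMartingale

variable {Ω : Type*}

theorem continuousWithinAt_incr {M : ℝ → Ω → ℝ} {ω : Ω}
    (hM : ∀ t, ContinuousWithinAt (M · ω) (Ici t) t) (s t : ℝ) :
    ContinuousWithinAt (incr M s · ω) (Ici t) t :=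
  (hM t).sub <| (hM (min t s)).comp (f := (min · s))
    (continuous_id.min continuous_const).continuousWithinAt fun _ hu => min_le_min_right s hu

theorem stoppedProcess_incr {M : ℝ → Ω → ℝ} {σ : Ω → WithTop ℝ} {s t : ℝ} {ω : Ω}
    (hs : (s : WithTop ℝ) ≤ σ ω) :
    stoppedProcess (incr M s) σ t ω = stoppedProcess M σ t ω - M (min t s) ω := by
  cases h : σ ω with
  | top => simp [stoppedProcess, incr, h]
  | coe x =>
    replace hs : s ≤ x := by simpa [h] using hs
    simp only [stoppedProcess, incr, h, ← WithTop.coe_min, WithTop.untopD_coe]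
    rw [min_assoc, min_eq_right hs]

noncomputable def EReal.toWithTop (x : EReal) : WithTop ℝ := WithBot.unbotD ⊤ x

@[simp]
theorem EReal.toWithTop_coe (x : ℝ) : (x : EReal).toWithTop = x := rfl

@[simp]
theorem EReal.toWithTop_top : (⊤ : EReal).toWithTop = ⊤ := rfl

theorem EReal.coe_le_toWithTop {x : ℝ} {y : EReal} (h : (x : EReal) ≤ y) :
    (x : WithTop ℝ) ≤ y.toWithTop := by
  induction y using EReal.rec <;> simp_all

theorem stoppedE_eq_stoppedProcess {M : ℝ → Ω → ℝ} {τ : Ω → EReal} {t : ℝ} {ω : Ω}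
    (hτ : τ ω ≠ ⊥) :
    stoppedE M τ t ω = stoppedProcess M (fun ω => (τ ω).toWithTop) t ω := by
  induction h : τ ω using EReal.rec with
  | bot => exact absurd h hτ
  | coe x =>
    simp only [stoppedE, stoppedProcess, h, ← EReal.coe_strictMono.monotone.map_min,
      EReal.toReal_coe, EReal.toWithTop_coe, ← WithTop.coe_min, WithTop.untopD_coe]
  | top => simp [stoppedE, stoppedProcess, h]

theorem IsStoppingTimeE.isStoppingTime_toWithTop {m : MeasurableSpace Ω} {ℱ : Filtration ℝ m}
    {τ : Ω → EReal} (hτ : IsStoppingTimeE ℱ τ) (hbot : ∀ ω, τ ω ≠ ⊥) :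
    IsStoppingTime ℱ fun ω => (τ ω).toWithTop := by
  intro u
  convert hτ u using 1
  ext ω
  induction h : τ ω using EReal.rec with
  | bot => exact absurd h (hbot ω)
  | coe x => simp [h]
  | top => simp [h]

end IncrementMartingale

theorem stmt0_general {Ω : Type*} {m : MeasurableSpace Ω} {μ : Measure Ω} [IsProbabilityMeasure μ]
    (ℱ : Filtration ℝ m)
    (M : ℝ → Ω → ℝ) (hM : IsIncMart ℱ μ M)
    (τ : Ω → EReal) (hτ : IsStoppingTimeE ℱ τ)
    (s₀ : ℝ) (hbdd : ∀ ω, (s₀ : EReal) ≤ τ ω) :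
    IsMart ℱ μ fun t ω => M t ω - stoppedE M τ t ω := by
  obtain ⟨hcadlag, hincr⟩ := hM
  have hbot (ω : Ω) : τ ω ≠ ⊥ := ne_bot_of_le_ne_bot (EReal.coe_ne_bot s₀) (hbdd ω)
  set σ : Ω → WithTop ℝ := fun ω => (τ ω).toWithTop
  have hN : Martingale (incr M s₀) ℱ μ := (hincr s₀).1
  have hNσ : Martingale (stoppedProcess (incr M s₀) σ) ℱ μ :=
    hN.stoppedProcess_of_rightContinuous
      (fun ω => continuousWithinAt_incr (hcadlag ω).1 s₀) (hτ.isStoppingTime_toWithTop hbot)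
  have heq : (fun t ω => M t ω - stoppedE M τ t ω) = incr M s₀ - stoppedProcess (incr M s₀) σ := by
    ext t ω
    rw [Pi.sub_apply, Pi.sub_apply, stoppedE_eq_stoppedProcess (hbot ω),
      stoppedProcess_incr (σ := σ) (EReal.coe_le_toWithTop (hbdd ω)), incr]
    ring
  rw [heq]
  exact ⟨hN.sub hNσ, (hN.sub hNσ).integrable⟩

/-- if `M` is an increment martingale and `τ` is a stopping time bounded
below by `s₀ ∈ ℝ`, then `(M_t - M_{t∧τ})_t` is a martingale. -/
theorem stmt0 {Ω : Type*} {m : MeasurableSpace Ω} {μ : Measure Ω} [IsProbabilityMeasure μ]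
    (ℱ : Filtration ℝ m) (hrc : RightContinuousFiltration ℱ) (hcpl : CompleteFiltration ℱ μ)
    (M : ℝ → Ω → ℝ) (hM : IsIncMart ℱ μ M)
    (τ : Ω → EReal) (hτ : IsStoppingTimeE ℱ τ)
    (s₀ : ℝ) (hbdd : ∀ ω, (s₀ : EReal) ≤ τ ω) :
    IsMart ℱ μ fun t ω => M t ω - stoppedE M τ t ω :=
  stmt0_general ℱ M hM τ hτ s₀ hbdd
end

section
/- If M = K + N is the decomposition of a square integrable increment martingale with E[N_t|F_t] = 0, then E[K_t N_t] = 0 for all t, E[M_t²] = E[K_t²] + E[N_t²], and t ↦ E[N_t²] is nonincreasing; more precisely E[N_t²] = E[N_s²] − E[(N_t − N_s)²] for s ≤ t. -/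
open MeasureTheory Filter Set

/-!
`N_t = M_t - E[M_t | ℱ_t]` is orthogonal in `L²` to every square integrable `ℱ_t`-measurable
variable. Both `K_t` and, for `s ≤ t`, `N_s - N_t = K_t - K_s - (M_t - M_s)` are of this kind,
the latter because the increments of `M` are adapted. The decomposition of `E[M_t²]` and the
formula for `E[N_t²]` are then Pythagoras' theorem.
-/

section L2Orthogonality

variable {Ω : Type*} {m m₀ : MeasurableSpace Ω} {μ : Measure Ω}

theorem integral_add_sq_of_integral_mul_eq_zero {f g : Ω → ℝ} (hf : MemLp f 2 μ)
    (hg : MemLp g 2 μ) (hfg : ∫ ω, f ω * g ω ∂μ = 0) :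
    ∫ ω, (f ω + g ω) ^ 2 ∂μ = ∫ ω, f ω ^ 2 ∂μ + ∫ ω, g ω ^ 2 ∂μ := by
  have hfg_int : Integrable (fun ω => 2 * (f ω * g ω)) μ := (hf.integrable_mul hg).const_mul 2
  calc ∫ ω, (f ω + g ω) ^ 2 ∂μ
      = ∫ ω, (f ω ^ 2 + 2 * (f ω * g ω)) + g ω ^ 2 ∂μ := by congr 1 with ω; ring
    _ = ∫ ω, f ω ^ 2 ∂μ + 2 * ∫ ω, f ω * g ω ∂μ + ∫ ω, g ω ^ 2 ∂μ := by
      rw [integral_add (f := fun ω => f ω ^ 2 + 2 * (f ω * g ω)) (hf.integrable_sq.add hfg_int)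
        hg.integrable_sq, integral_add hf.integrable_sq hfg_int, integral_const_mul]
    _ = ∫ ω, f ω ^ 2 ∂μ + ∫ ω, g ω ^ 2 ∂μ := by rw [hfg]; ring

theorem integral_sq_eq_integral_sq_sub_integral_sub_sq {f g : Ω → ℝ} (hf : MemLp f 2 μ)
    (hg : MemLp g 2 μ) (hfg : ∫ ω, (g ω - f ω) * f ω ∂μ = 0) :
    ∫ ω, f ω ^ 2 ∂μ = ∫ ω, g ω ^ 2 ∂μ - ∫ ω, (f ω - g ω) ^ 2 ∂μ := by
  have hpyth : ∫ ω, g ω ^ 2 ∂μ = ∫ ω, (g ω - f ω) ^ 2 ∂μ + ∫ ω, f ω ^ 2 ∂μ := by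
    simpa only [Pi.sub_apply, sub_add_cancel] using
      integral_add_sq_of_integral_mul_eq_zero (hg.sub hf) hf hfg
  have hsymm : ∫ ω, (f ω - g ω) ^ 2 ∂μ = ∫ ω, (g ω - f ω) ^ 2 ∂μ := by
    congr 1 with ω; ring
  linarith

theorem integral_mul_sub_condExp_eq_zero [IsFiniteMeasure μ] (hm : m ≤ m₀) {f g : Ω → ℝ}
    (hf : MemLp f 2 μ) (hg : MemLp g 2 μ) (hgm : AEStronglyMeasurable[m] g μ) :
    ∫ ω, g ω * (f ω - μ[f|m] ω) ∂μ = 0 := by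
  have hf_int : Integrable f μ := hf.integrable one_le_two
  have hcond_zero : μ[f - μ[f|m]|m] =ᵐ[μ] 0 := by
    filter_upwards [condExp_sub hf_int integrable_condExp m] with ω hω
    rw [hω, Pi.sub_apply, condExp_of_stronglyMeasurable hm stronglyMeasurable_condExp
      integrable_condExp, sub_self, Pi.zero_apply]
  have hpull : μ[g * (f - μ[f|m])|m] =ᵐ[μ] g * μ[f - μ[f|m]|m] :=
    condExp_mul_of_aestronglyMeasurable_left hgm
      (hg.integrable_mul (hf.sub (hf.condExp one_le_two))) (hf_int.sub integrable_condExp)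
  calc ∫ ω, g ω * (f ω - μ[f|m] ω) ∂μ = ∫ ω, μ[g * (f - μ[f|m])|m] ω ∂μ :=
        (integral_condExp hm).symm
    _ = ∫ ω, (0 : Ω → ℝ) ω ∂μ := integral_congr_ae <| by
      filter_upwards [hpull, hcond_zero] with ω hpull_ω hzero_ω
      rw [hpull_ω, Pi.mul_apply, hzero_ω, Pi.zero_apply, mul_zero]
    _ = 0 := integral_zero Ω ℝ

end L2Orthogonality

theorem aestronglyMeasurable_sub_of_stronglyAdapted_incr {Ω : Type*} {m : MeasurableSpace Ω}
    {μ : Measure Ω} {ℱ : Filtration ℝ m} {M K N : ℝ → Ω → ℝ} {s t : ℝ} (hst : s ≤ t)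
    (hM : StronglyAdapted ℱ (incr M s)) (hK : ∀ t, AEStronglyMeasurable[ℱ t] (K t) μ)
    (hN : ∀ t ω, N t ω = M t ω - K t ω) :
    AEStronglyMeasurable[ℱ t] (fun ω => N s ω - N t ω) μ := by
  have hincr : (fun ω => N s ω - N t ω) = K t - K s - incr M s t := by
    ext ω; simp only [hN, incr, min_eq_right hst, Pi.sub_apply]; ring
  rw [hincr]
  exact ((hK t).sub ((hK s).mono (ℱ.mono hst))).sub (hM t).aestronglyMeasurable

theorem stmt3_general {Ω : Type*} {m : MeasurableSpace Ω} {μ : Measure Ω} [IsProbabilityMeasure μ]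
    (ℱ : Filtration ℝ m)
    (M K N : ℝ → Ω → ℝ) (hM : IsIncMart ℱ μ M)
    (hL2 : ∀ t, MemLp (M t) 2 μ)
    (hK : ∀ t : ℝ, K t =ᵐ[μ] μ[M t | ℱ t])
    (hN : ∀ t ω, N t ω = M t ω - K t ω) :
    (∀ t, ∫ ω, K t ω * N t ω ∂μ = 0) ∧
    (∀ t, ∫ ω, (M t ω) ^ 2 ∂μ = ∫ ω, (K t ω) ^ 2 ∂μ + ∫ ω, (N t ω) ^ 2 ∂μ) ∧
    (Antitone fun t => ∫ ω, (N t ω) ^ 2 ∂μ) ∧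
    ∀ s t : ℝ, s ≤ t →
      ∫ ω, (N t ω) ^ 2 ∂μ = ∫ ω, (N s ω) ^ 2 ∂μ - ∫ ω, (N t ω - N s ω) ^ 2 ∂μ := by
  have hKL2 t : MemLp (K t) 2 μ := ((hL2 t).condExp one_le_two).ae_eq (hK t).symm
  have hNL2 t : MemLp (N t) 2 μ :=
    ((hL2 t).sub (hKL2 t)).ae_eq (.of_forall fun ω => (hN t ω).symm)
  have hKm t : AEStronglyMeasurable[ℱ t] (K t) μ :=
    stronglyMeasurable_condExp.aestronglyMeasurable.congr (hK t).symm
  have horth t g (hg : MemLp g 2 μ) (hgm : AEStronglyMeasurable[ℱ t] g μ) :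
      ∫ ω, g ω * N t ω ∂μ = 0 := by
    rw [← integral_mul_sub_condExp_eq_zero (ℱ.le t) (hL2 t) hg hgm]
    refine integral_congr_ae ?_
    filter_upwards [hK t] with ω hω
    rw [hN, hω]
  have hKN t : ∫ ω, K t ω * N t ω ∂μ = 0 := horth t _ (hKL2 t) (hKm t)
  have hdecay s t (hst : s ≤ t) :
      ∫ ω, (N t ω) ^ 2 ∂μ = ∫ ω, (N s ω) ^ 2 ∂μ - ∫ ω, (N t ω - N s ω) ^ 2 ∂μ :=
    integral_sq_eq_integral_sq_sub_integral_sub_sq (hNL2 t) (hNL2 s) <|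
      horth t _ ((hNL2 s).sub (hNL2 t))
        (aestronglyMeasurable_sub_of_stronglyAdapted_incr hst (hM.2 s).1.1 hKm hN)
  refine ⟨hKN, fun t => ?_, fun s t hst => ?_, hdecay⟩
  · have hMKN ω : M t ω = K t ω + N t ω := by rw [hN, add_sub_cancel]
    simp only [hMKN]
    exact integral_add_sq_of_integral_mul_eq_zero (hKL2 t) (hNL2 t) (hKN t)
  · have : 0 ≤ ∫ ω, (N t ω - N s ω) ^ 2 ∂μ := integral_nonneg fun ω => sq_nonneg _
    linarith [hdecay s t hst]

/-- for the decomposition `M = K + N` of a square integrable increment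
martingale with `K_t = E[M_t | ℱ_t]`, one has `E[K_t N_t] = 0`,
`E[M_t²] = E[K_t²] + E[N_t²]`, `t ↦ E[N_t²]` is nonincreasing, and
`E[N_t²] = E[N_s²] - E[(N_t - N_s)²]` for `s ≤ t`. -/
theorem stmt3 {Ω : Type*} {m : MeasurableSpace Ω} {μ : Measure Ω} [IsProbabilityMeasure μ]
    (ℱ : Filtration ℝ m) (hrc : RightContinuousFiltration ℱ) (hcpl : CompleteFiltration ℱ μ)
    (M K N : ℝ → Ω → ℝ) (hM : IsIncMart ℱ μ M)
    (hL2 : ∀ t, MemLp (M t) 2 μ)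
    (hK : ∀ t : ℝ, K t =ᵐ[μ] μ[M t | ℱ t])
    (hN : ∀ t ω, N t ω = M t ω - K t ω) :
    (∀ t, ∫ ω, K t ω * N t ω ∂μ = 0) ∧
    (∀ t, ∫ ω, (M t ω) ^ 2 ∂μ = ∫ ω, (K t ω) ^ 2 ∂μ + ∫ ω, (N t ω) ^ 2 ∂μ) ∧
    (Antitone fun t => ∫ ω, (N t ω) ^ 2 ∂μ) ∧
    ∀ s t : ℝ, s ≤ t →
      ∫ ω, (N t ω) ^ 2 ∂μ = ∫ ω, (N s ω) ^ 2 ∂μ - ∫ ω, (N t ω - N s ω) ^ 2 ∂μ :=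
  stmt3_general ℱ M K N hM hL2 hK hN
end
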